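/- arXiv:1904.11300 — 3 statements merged into one kernel-verified Lean document; each statement's English description precedes it below -/
import Mathlib

section
/- Let H₀, H₁ ∈ B(𝓗) be self-adjoint, let c ∈ ℝ, set H := H₀ + c·H₁, and assume that the spectra of H₀ and of H are both contained in [1,∞). With K₀ := ‖H₁·(√H₀)⁻¹‖, one has ‖√H₀ ψ‖ ≤ ‖√H ψ‖ + 3·|c|·K₀·‖ψ‖ for every ψ ∈ 𝓗. -/
/-!
Since `√H₀² = H₀` and `√H² = H`, the squared norms `‖√H₀ ψ‖²` and `‖√H ψ‖²` are the quadratic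
forms `⟪H₀ ψ, ψ⟫` and `⟪H ψ, ψ⟫`, which differ by `c ⟪H₁ ψ, ψ⟫`. Writing `H₁ = (H₁ (√H₀)⁻¹) √H₀`
bounds that difference by `|c| K₀ ‖√H₀ ψ‖ ‖ψ‖`, and `a² ≤ b² + k a` forces `a ≤ b + k`; this
even gives the estimate with constant `1` instead of `3`.
-/

variable {𝓗 : Type*} [NormedAddCommGroup 𝓗] [InnerProductSpace ℂ 𝓗] [CompleteSpace 𝓗]

lemma le_add_of_sq_le_sq_add_mul {a b k : ℝ} (hb : 0 ≤ b) (hk : 0 ≤ k)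
    (h : a ^ 2 ≤ b ^ 2 + k * a) : a ≤ b + k := by
  nlinarith

lemma isStrictlyPositive_of_spectrum_subset_Ici {A : Type*} [CStarAlgebra A] [PartialOrder A]
    [StarOrderedRing A] {a : A} {δ : ℝ} (hδ : 0 < δ) (ha : IsSelfAdjoint a)
    (hspec : spectrum ℝ a ⊆ Set.Ici δ) : IsStrictlyPositive a :=
  CStarAlgebra.isStrictlyPositive_iff_isSelfAdjoint_and_spectrum_pos.mpr
    ⟨ha, fun _ hx => hδ.trans_le (hspec hx)⟩

namespace ContinuousLinearMap

lemma abs_reApplyInnerSelf_le {𝕜 E : Type*} [RCLike 𝕜] [NormedAddCommGroup E]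
    [InnerProductSpace 𝕜 E] (T : E →L[𝕜] E) (x : E) :
    |T.reApplyInnerSelf x| ≤ ‖T x‖ * ‖x‖ :=
  (RCLike.abs_re_le_norm _).trans (norm_inner_le_norm _ _)

lemma reApplyInnerSelf_add_smul {E : Type*} [NormedAddCommGroup E] [InnerProductSpace ℂ E]
    (S T : E →L[ℂ] E) (c : ℝ) (x : E) :
    (S + c • T).reApplyInnerSelf x = S.reApplyInnerSelf x + c * T.reApplyInnerSelf x := by
  simp [reApplyInnerSelf_apply, inner_add_left, ← Complex.coe_smul, inner_smul_left]

lemma norm_apply_le_norm_mul_inverse_mul {𝕜 E : Type*} [NontriviallyNormedField 𝕜]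
    [NormedAddCommGroup E] [NormedSpace 𝕜 E] (T A : E →L[𝕜] E) (hA : IsUnit A) (x : E) :
    ‖T x‖ ≤ ‖T * Ring.inverse A‖ * ‖A x‖ := by
  have hT : T = (T * Ring.inverse A) * A := by
    rw [mul_assoc, Ring.inverse_mul_cancel A hA, mul_one]
  calc ‖T x‖ = ‖(T * Ring.inverse A * A) x‖ := by rw [← hT]
    _ = ‖(T * Ring.inverse A) (A x)‖ := rfl
    _ ≤ ‖T * Ring.inverse A‖ * ‖A x‖ := le_opNorm _ _

lemma norm_cfcSqrt_apply_sq {T : 𝓗 →L[ℂ] 𝓗} (hT : 0 ≤ T) (x : 𝓗) :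
    ‖CFC.sqrt T x‖ ^ 2 = T.reApplyInnerSelf x := by
  have hsa : adjoint (CFC.sqrt T) = CFC.sqrt T := (CFC.sqrt_nonneg T).isSelfAdjoint
  rw [apply_norm_sq_eq_inner_adjoint_left, hsa, ← mul_def, CFC.sqrt_mul_sqrt_self T hT,
    reApplyInnerSelf_apply]

end ContinuousLinearMap

/-- Let `H := H₀ + c·H₁` with `H₀, H₁` self-adjoint and spectra of `H₀` and `H`
in `[1,∞)`.  With `K₀ := ‖H₁·(√H₀)⁻¹‖`, one has
`‖√H₀ ψ‖ ≤ ‖√H ψ‖ + 3·|c|·K₀·‖ψ‖` for every `ψ ∈ 𝓗`. -/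
theorem stmt_7 (H₀ H₁ : 𝓗 →L[ℂ] 𝓗) (hH₀ : IsSelfAdjoint H₀) (hH₁ : IsSelfAdjoint H₁)
    (c : ℝ) (H : 𝓗 →L[ℂ] 𝓗) (hH : H = H₀ + c • H₁)
    (hspec₀ : spectrum ℝ H₀ ⊆ Set.Ici 1) (hspec : spectrum ℝ H ⊆ Set.Ici 1)
    (K₀ : ℝ) (hK₀ : K₀ = ‖H₁ * Ring.inverse (CFC.sqrt H₀)‖) :
    ∀ ψ : 𝓗, ‖CFC.sqrt H₀ ψ‖ ≤ ‖CFC.sqrt H ψ‖ + 3 * |c| * K₀ * ‖ψ‖ := by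
  intro ψ
  have hHsa : IsSelfAdjoint H := hH ▸ hH₀.add ((IsSelfAdjoint.all c).smul hH₁)
  have hpos₀ := isStrictlyPositive_of_spectrum_subset_Ici one_pos hH₀ hspec₀
  have hpos := isStrictlyPositive_of_spectrum_subset_Ici one_pos hHsa hspec
  have hR₁ : |H₁.reApplyInnerSelf ψ| ≤ K₀ * ‖CFC.sqrt H₀ ψ‖ * ‖ψ‖ := by
    refine (H₁.abs_reApplyInnerSelf_le ψ).trans ?_
    rw [hK₀]
    gcongr
    exact H₁.norm_apply_le_norm_mul_inverse_mul _ hpos₀.isUnit_cfcSqrt ψ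
  have hcR₁ : |c * H₁.reApplyInnerSelf ψ| ≤ |c| * K₀ * ‖ψ‖ * ‖CFC.sqrt H₀ ψ‖ := by
    rw [abs_mul]
    linarith [mul_le_mul_of_nonneg_left hR₁ (abs_nonneg c)]
  have hsq : ‖CFC.sqrt H₀ ψ‖ ^ 2
      ≤ ‖CFC.sqrt H ψ‖ ^ 2 + |c| * K₀ * ‖ψ‖ * ‖CFC.sqrt H₀ ψ‖ := by
    rw [ContinuousLinearMap.norm_cfcSqrt_apply_sq hpos₀.nonneg,
      ContinuousLinearMap.norm_cfcSqrt_apply_sq hpos.nonneg, hH,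
      ContinuousLinearMap.reApplyInnerSelf_add_smul]
    linarith [neg_abs_le (c * H₁.reApplyInnerSelf ψ)]
  have hk : 0 ≤ |c| * K₀ * ‖ψ‖ := by rw [hK₀]; positivity
  linarith [le_add_of_sq_le_sq_add_mul (norm_nonneg _) hk hsq]
end

section
/- Let H₀, H₁ ∈ B(𝓗) be self-adjoint, let c ∈ ℝ, set H := H₀ + c·H₁, and assume that the spectra of H₀ and of H are both contained in [1,∞). With K₀ := ‖H₁·(√H₀)⁻¹‖, one has ‖√H₀·(√H)⁻¹‖ ≤ 1 + |c|·K₀. -/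
/-! With `A = √H₀ ≥ 1` and `B = √H ≥ 1`, the C⋆-identity gives
`‖A B⁻¹‖² = ‖B⁻¹ A² B⁻¹‖ = ‖B⁻¹ (B² - c H₁) B⁻¹‖ = ‖1 - c B⁻¹ H₁ B⁻¹‖`. Writing
`B⁻¹ H₁ B⁻¹ = B⁻¹ (H₁ A⁻¹) (A B⁻¹)` and using `‖B⁻¹‖ ≤ 1`, the number `t = ‖A B⁻¹‖` satisfies
`t² ≤ 1 + |c| K₀ t`, which forces `t ≤ 1 + |c| K₀`. -/

open MeasureTheory
set_option synthInstance.maxHeartbeats 1000000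
set_option maxHeartbeats 1000000

variable {𝓗 : Type*} [NormedAddCommGroup 𝓗] [InnerProductSpace ℂ 𝓗] [CompleteSpace 𝓗]

lemma le_one_add_of_sq_le_one_add_mul {t a : ℝ} (ha : 0 ≤ a) (h : t ^ 2 ≤ 1 + a * t) :
    t ≤ 1 + a := by
  nlinarith

namespace CStarAlgebra

open CFC

variable {A : Type*} [CStarAlgebra A] [PartialOrder A] [StarOrderedRing A]

lemma one_le_sqrt {a : A} (ha : 1 ≤ a) : 1 ≤ sqrt a :=
  sqrt_one (A := A) ▸ sqrt_le_sqrt 1 a ha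

lemma norm_inv_le_one {b : Aˣ} (hb : 1 ≤ (b : A)) : ‖(↑b⁻¹ : A)‖ ≤ 1 :=
  (norm_le_one_iff_of_nonneg _ (inv_nonneg_of_nonneg b (zero_le_one.trans hb))).mpr
    (CStarAlgebra.inv_le_one hb)

lemma norm_one_le : ‖(1 : A)‖ ≤ 1 :=
  (norm_le_one_iff_of_nonneg 1).mpr le_rfl

lemma sq_norm_mul_inv_le {p x : A} {q : Aˣ} {c : ℝ} (hp : IsSelfAdjoint p) (hpu : IsUnit p)
    (hq : IsSelfAdjoint (↑q⁻¹ : A)) (hq_norm : ‖(↑q⁻¹ : A)‖ ≤ 1) (hpq : q * q = p * p + c • x) :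
    ‖p * ↑q⁻¹‖ ^ 2 ≤ 1 + |c| * ‖x * Ring.inverse p‖ * ‖p * ↑q⁻¹‖ := by
  set t := ‖p * ↑q⁻¹‖
  have hconj : (↑q⁻¹ : A) * (p * p) * ↑q⁻¹ = 1 - c • (↑q⁻¹ * x * ↑q⁻¹) := by
    rw [eq_sub_iff_add_eq, ← smul_mul_assoc, ← mul_smul_comm, ← add_mul, ← mul_add, ← hpq]
    simp
  have hmiddle : (↑q⁻¹ : A) * x * ↑q⁻¹ = ↑q⁻¹ * (x * Ring.inverse p) * (p * ↑q⁻¹) := by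
    simp only [mul_assoc, Ring.inverse_mul_cancel_left _ _ hpu]
  have hsmall : ‖(↑q⁻¹ : A) * x * ↑q⁻¹‖ ≤ ‖x * Ring.inverse p‖ * t :=
    calc ‖(↑q⁻¹ : A) * x * ↑q⁻¹‖ ≤ ‖(↑q⁻¹ : A)‖ * ‖x * Ring.inverse p‖ * t :=
          hmiddle ▸ norm_mul₃_le
      _ ≤ 1 * ‖x * Ring.inverse p‖ * t := by gcongr
      _ = ‖x * Ring.inverse p‖ * t := by rw [one_mul]
  calc t ^ 2 = ‖(↑q⁻¹ : A) * (p * p) * ↑q⁻¹‖ := by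
        rw [sq, ← CStarRing.norm_star_mul_self, star_mul, hp.star_eq, hq.star_eq, mul_assoc,
          mul_assoc, mul_assoc]
    _ ≤ ‖(1 : A)‖ + |c| * ‖(↑q⁻¹ : A) * x * ↑q⁻¹‖ := by
        rw [hconj, ← Real.norm_eq_abs, ← norm_smul]
        exact norm_sub_le _ _
    _ ≤ 1 + |c| * (‖x * Ring.inverse p‖ * t) := by gcongr; exact norm_one_le
    _ = 1 + |c| * ‖x * Ring.inverse p‖ * t := by ring

theorem norm_sqrt_mul_inverse_sqrt_add_smul_le {a x : A} {c : ℝ} (ha : 1 ≤ a)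
    (hb : 1 ≤ a + c • x) :
    ‖sqrt a * Ring.inverse (sqrt (a + c • x))‖ ≤ 1 + |c| * ‖x * Ring.inverse (sqrt a)‖ := by
  have hq₁ := one_le_sqrt hb
  lift sqrt (a + c • x) to Aˣ using isUnit_of_le 1 hq₁ with q hq
  rw [Ring.inverse_unit]
  refine le_one_add_of_sq_le_one_add_mul (by positivity) (sq_norm_mul_inv_le ?_ ?_ ?_ ?_ ?_)
  · exact .of_nonneg (sqrt_nonneg a)
  · exact isUnit_of_le 1 (one_le_sqrt ha)
  · exact .of_nonneg (inv_nonneg_of_nonneg q (zero_le_one.trans hq₁))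
  · exact norm_inv_le_one hq₁
  · rw [hq, sqrt_mul_sqrt_self _ (zero_le_one.trans hb), sqrt_mul_sqrt_self _ (zero_le_one.trans ha)]

end CStarAlgebra

/-- Let `H := H₀ + c·H₁` with `H₀, H₁` self-adjoint and spectra of `H₀` and `H`
in `[1,∞)`.  With `K₀ := ‖H₁·(√H₀)⁻¹‖`, one has `‖√H₀·(√H)⁻¹‖ ≤ 1 + |c|·K₀`. -/
theorem stmt_10 (H₀ H₁ : 𝓗 →L[ℂ] 𝓗) (hH₀ : IsSelfAdjoint H₀) (hH₁ : IsSelfAdjoint H₁)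
    (c : ℝ) (H : 𝓗 →L[ℂ] 𝓗) (hH : H = H₀ + c • H₁)
    (hspec₀ : spectrum ℝ H₀ ⊆ Set.Ici 1) (hspec : spectrum ℝ H ⊆ Set.Ici 1)
    (K₀ : ℝ) (hK₀ : K₀ = ‖H₁ * Ring.inverse (CFC.sqrt H₀)‖) :
    ‖CFC.sqrt H₀ * Ring.inverse (CFC.sqrt H)‖ ≤ 1 + |c| * K₀ := by
  have hH_sa : IsSelfAdjoint H := hH ▸ hH₀.add ((IsSelfAdjoint.all c).smul hH₁)
  have h₀ : 1 ≤ H₀ := CFC.one_le (R := ℝ) hspec₀ hH₀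
  have h : 1 ≤ H := CFC.one_le (R := ℝ) hspec hH_sa
  subst hH hK₀
  exact CStarAlgebra.norm_sqrt_mul_inverse_sqrt_add_smul_le h₀ h
end

section
/- Let H₀, H₁ ∈ B(𝓗) be self-adjoint, let ε > 0 and η > 0, and let g be a switching function. Set H(t) := H₀ + ε·g(η·t)·H₁ and assume spectrum of H(t) is contained in [1,∞) for every t ∈ ℝ. Then for every t ∈ ℝ the map s ↦ √H(s) is differentiable at t in operator norm, with derivative equal to (2·ε·η·g′(η·t)/π) · ∫_{(0,∞)} x²·(x²·1 + H(t))⁻¹·H₁·(x²·1 + H(t))⁻¹ dx, where the integral is a Bochner integral in B(𝓗) of a norm-integrable function. -/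
/-!
For self-adjoint `a` with spectrum in `[1, ∞)`, the scalar identity
`√r = (2/π) ∫₀^∞ r / (x² + r) dx` lifts through the continuous functional calculus to
`√a = (2/π) ∫₀^∞ (1 - x² (x² + a)⁻¹) dx`, and the integrand is dominated by `‖a‖ / (1 + x²)`.
Along `H(s) = H₀ + c(s) H₁` the resolvent identity writes the difference of these integrals at
`s` and `t` as `(c s - c t) • G s` with `G s = ∫ x² (x² + H t)⁻¹ H₁ (x² + H s)⁻¹ dx`; the
integrand of `G` is dominated by `‖H₁‖ / (1 + x²)`, so `G` is continuous at `t`, and the slope of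
`s ↦ √H(s)` at `t` tends to `(2/π) c'(t) G t`.
-/

open MeasureTheory Set Real

lemma integral_Ioi_div_sq_add {r : ℝ} (hr : 0 < r) :
    ∫ x in Ioi (0 : ℝ), r / (x ^ 2 + r) = π / 2 * √r := by
  have hsr : 0 < √r := Real.sqrt_pos.mpr hr
  have hsub : ∀ u : ℝ, r / ((√r * u) ^ 2 + r) = (1 + u ^ 2)⁻¹ := fun u => by
    rw [mul_pow, Real.sq_sqrt hr.le]
    field_simp
    ring
  have key := integral_comp_mul_left_Ioi (fun x => r / (x ^ 2 + r)) 0 hsr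
  simp only [hsub, mul_zero, integral_Ioi_inv_one_add_sq, arctan_zero, sub_zero,
    smul_eq_mul] at key
  rw [key]
  field_simp

lemma div_sq_add_le_mul_inv_one_add_sq {r R : ℝ} (x : ℝ) (hr : 1 ≤ r) (hR : r ≤ R) :
    r / (x ^ 2 + r) ≤ R * (1 + x ^ 2)⁻¹ := by
  rw [← div_eq_mul_inv, div_le_div_iff₀ (by positivity) (by positivity)]
  nlinarith [mul_le_mul_of_nonneg_right hR (sq_nonneg x)]

lemma ContinuousAt.ringInverse {X R : Type*} [TopologicalSpace X] [NormedRing R] [CompleteSpace R]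
    {f : X → R} {x : X} (hf : ContinuousAt f x) (hu : IsUnit (f x)) :
    ContinuousAt (fun y => Ring.inverse (f y)) x := by
  obtain ⟨u, hu⟩ := hu
  exact (hu ▸ NormedRing.inverse_continuousAt u).comp hf

lemma Continuous.integrable_of_norm_le_mul_inv_one_add_sq {E : Type*} [NormedAddCommGroup E]
    {f : ℝ → E} {C : ℝ} (hf : Continuous f) (h : ∀ x, ‖f x‖ ≤ C * (1 + x ^ 2)⁻¹) :
    Integrable f :=
  (integrable_inv_one_add_sq.const_mul C).mono' hf.aestronglyMeasurable (.of_forall h)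

theorem hasDerivAt_of_sub_eq_smul {𝕜 E : Type*} [NontriviallyNormedField 𝕜]
    [NormedAddCommGroup E] [NormedSpace 𝕜 E] {f G : 𝕜 → E} {c : 𝕜 → 𝕜} {c' t : 𝕜}
    (hc : HasDerivAt c c' t) (hG : ContinuousAt G t) (h : ∀ s, f s - f t = (c s - c t) • G s) :
    HasDerivAt f (c' • G t) t := by
  rw [hasDerivAt_iff_tendsto_slope] at hc ⊢
  have hslope : slope f t = fun s => slope c t s • G s := by
    ext s
    rw [slope_def_module, slope_def_field, h, smul_smul, div_eq_inv_mul]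
  rw [hslope]
  exact hc.smul (hG.tendsto.mono_left nhdsWithin_le_nhds)

section CStarAlgebra

variable {A : Type*} [CStarAlgebra A] {a b : A}

lemma le_norm_of_mem_spectrum {r : ℝ} (hr : r ∈ spectrum ℝ a) : r ≤ ‖a‖ := by
  have : Nontrivial A := by
    by_contra h
    rw [not_nontrivial_iff_subsingleton] at h
    simp [spectrum.of_subsingleton] at hr
  exact (le_abs_self r).trans (spectrum.norm_le_norm_of_mem hr)

lemma cfc_const_add_id (c : ℝ) (ha : IsSelfAdjoint a) :
    cfc (fun r : ℝ => c + r) a = c • (1 : A) + a := by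
  rw [cfc_const_add c (fun r => r) a, cfc_id' ℝ a, Algebra.algebraMap_eq_smul_one]

lemma isUnit_sq_smul_one_add (ha : IsSelfAdjoint a) (hs : spectrum ℝ a ⊆ Ici 1) (x : ℝ) :
    IsUnit (x ^ 2 • (1 : A) + a) := by
  rw [← cfc_const_add_id _ ha]
  refine (isUnit_cfc_iff _ a).2 fun r hr => ?_
  have : (1 : ℝ) ≤ r := hs hr
  positivity

lemma ringInverse_sq_smul_one_add_eq_cfc (ha : IsSelfAdjoint a) (hs : spectrum ℝ a ⊆ Ici 1)
    (x : ℝ) : Ring.inverse (x ^ 2 • (1 : A) + a) = cfc (fun r : ℝ => (x ^ 2 + r)⁻¹) a := by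
  have hpos : ∀ r ∈ spectrum ℝ a, x ^ 2 + r ≠ 0 := fun r hr => by
    have : (1 : ℝ) ≤ r := hs hr
    positivity
  rw [cfc_inv (a := a) (f := fun r : ℝ => x ^ 2 + r) hpos, cfc_const_add_id _ ha]

lemma norm_ringInverse_sq_smul_one_add_le (ha : IsSelfAdjoint a) (hs : spectrum ℝ a ⊆ Ici 1)
    (x : ℝ) : ‖Ring.inverse (x ^ 2 • (1 : A) + a)‖ ≤ (1 + x ^ 2)⁻¹ := by
  rw [ringInverse_sq_smul_one_add_eq_cfc ha hs x]
  refine norm_cfc_le (by positivity) fun r hr => ?_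
  have : (1 : ℝ) ≤ r := hs hr
  rw [norm_inv, Real.norm_of_nonneg (by positivity)]
  exact inv_anti₀ (by positivity) (by linarith)

lemma one_sub_sq_smul_ringInverse_eq_cfc (ha : IsSelfAdjoint a) (hs : spectrum ℝ a ⊆ Ici 1)
    (x : ℝ) :
    1 - x ^ 2 • Ring.inverse (x ^ 2 • (1 : A) + a) = cfc (fun r : ℝ => r / (x ^ 2 + r)) a := by
  have hpos : ∀ r ∈ spectrum ℝ a, x ^ 2 + r ≠ 0 := fun r hr => by
    have : (1 : ℝ) ≤ r := hs hr
    positivity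
  have hcont : ContinuousOn (fun r : ℝ => (x ^ 2 + r)⁻¹) (spectrum ℝ a) :=
    (continuousOn_const.add continuousOn_id).inv₀ hpos
  rw [ringInverse_sq_smul_one_add_eq_cfc ha hs, ← cfc_smul (x ^ 2) _ a hcont,
    ← cfc_const_one ℝ a ha, ← cfc_sub (fun _ => (1 : ℝ)) (fun r => x ^ 2 • (x ^ 2 + r)⁻¹) a
      continuousOn_const (hcont.fun_const_smul _)]
  refine cfc_congr fun r hr => ?_
  have := hpos r hr
  simp only [smul_eq_mul]
  field_simp
  ring

lemma norm_one_sub_sq_smul_ringInverse_le (ha : IsSelfAdjoint a) (hs : spectrum ℝ a ⊆ Ici 1)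
    (x : ℝ) : ‖1 - x ^ 2 • Ring.inverse (x ^ 2 • (1 : A) + a)‖ ≤ ‖a‖ * (1 + x ^ 2)⁻¹ := by
  rw [one_sub_sq_smul_ringInverse_eq_cfc ha hs x]
  refine norm_cfc_le (by positivity) fun r hr => ?_
  have : (1 : ℝ) ≤ r := hs hr
  rw [Real.norm_of_nonneg (by positivity)]
  exact div_sq_add_le_mul_inv_one_add_sq x this (le_norm_of_mem_spectrum hr)

lemma continuous_ringInverse_sq_smul_one_add (ha : IsSelfAdjoint a) (hs : spectrum ℝ a ⊆ Ici 1) :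
    Continuous fun x : ℝ => Ring.inverse (x ^ 2 • (1 : A) + a) :=
  continuous_iff_continuousAt.2 fun x =>
    (by fun_prop : Continuous fun x : ℝ => x ^ 2 • (1 : A) + a).continuousAt.ringInverse
      (isUnit_sq_smul_one_add ha hs x)

lemma integrable_one_sub_sq_smul_ringInverse (ha : IsSelfAdjoint a) (hs : spectrum ℝ a ⊆ Ici 1) :
    Integrable fun x : ℝ => 1 - x ^ 2 • Ring.inverse (x ^ 2 • (1 : A) + a) :=
  (continuous_const.sub ((continuous_pow 2).smul (continuous_ringInverse_sq_smul_one_add ha hs))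
    ).integrable_of_norm_le_mul_inv_one_add_sq (norm_one_sub_sq_smul_ringInverse_le ha hs)

lemma norm_sq_smul_ringInverse_mul_mul_ringInverse_le (ha : IsSelfAdjoint a)
    (hs : spectrum ℝ a ⊆ Ici 1) (hb : IsSelfAdjoint b) (hsb : spectrum ℝ b ⊆ Ici 1) (m : A)
    (x : ℝ) :
    ‖x ^ 2 • (Ring.inverse (x ^ 2 • (1 : A) + a) * m * Ring.inverse (x ^ 2 • (1 : A) + b))‖
      ≤ ‖m‖ * (1 + x ^ 2)⁻¹ := by
  have hx : x ^ 2 * (1 + x ^ 2)⁻¹ ≤ 1 := by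
    rw [← div_eq_mul_inv, div_le_one (by positivity)]
    linarith
  calc _ ≤ x ^ 2 * ((1 + x ^ 2)⁻¹ * ‖m‖ * (1 + x ^ 2)⁻¹) := by
        rw [norm_smul, Real.norm_of_nonneg (by positivity)]
        gcongr
        refine (norm_mul_le _ _).trans (mul_le_mul ((norm_mul_le _ _).trans ?_)
          (norm_ringInverse_sq_smul_one_add_le hb hsb x) (norm_nonneg _) (by positivity))
        gcongr
        exact norm_ringInverse_sq_smul_one_add_le ha hs x
    _ = ‖m‖ * (1 + x ^ 2)⁻¹ * (x ^ 2 * (1 + x ^ 2)⁻¹) := by ring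
    _ ≤ ‖m‖ * (1 + x ^ 2)⁻¹ := mul_le_of_le_one_right (by positivity) hx

lemma integrable_sq_smul_ringInverse_mul_mul_ringInverse (ha : IsSelfAdjoint a)
    (hs : spectrum ℝ a ⊆ Ici 1) (hb : IsSelfAdjoint b) (hsb : spectrum ℝ b ⊆ Ici 1) (m : A) :
    Integrable fun x : ℝ =>
      x ^ 2 • (Ring.inverse (x ^ 2 • (1 : A) + a) * m * Ring.inverse (x ^ 2 • (1 : A) + b)) :=
  ((continuous_pow 2).smul (((continuous_ringInverse_sq_smul_one_add ha hs).mul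
    continuous_const).mul (continuous_ringInverse_sq_smul_one_add hb hsb))
    ).integrable_of_norm_le_mul_inv_one_add_sq
    (norm_sq_smul_ringInverse_mul_mul_ringInverse_le ha hs hb hsb m)

theorem sqrt_eq_integral_one_sub_sq_smul_ringInverse [PartialOrder A] [StarOrderedRing A]
    (ha : IsSelfAdjoint a) (hs : spectrum ℝ a ⊆ Ici 1) :
    CFC.sqrt a =
      (2 / π) • ∫ x in Ioi (0 : ℝ), (1 - x ^ 2 • Ring.inverse (x ^ 2 • (1 : A) + a)) := by
  have ha₀ : 0 ≤ a :=
    (StarOrderedRing.nonneg_iff_spectrum_nonneg a ha).2 fun r hr => zero_le_one.trans (hs hr)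
  have hcfc := cfc_integral (μ := volume.restrict (Ioi (0 : ℝ))) (fun x r => r / (x ^ 2 + r))
    (fun x => ‖a‖ * (1 + x ^ 2)⁻¹) a ?cont ?bound
    (integrable_inv_one_add_sq.const_mul ‖a‖).restrict.hasFiniteIntegral ha
  · calc CFC.sqrt a = cfc Real.sqrt a := by rw [CFC.sqrt_eq_real_sqrt a ha₀, cfcₙ_eq_cfc]
      _ = (2 / π) • cfc (fun r => ∫ x in Ioi (0 : ℝ), r / (x ^ 2 + r)) a := by
        rw [cfc_congr fun r hr => integral_Ioi_div_sq_add (zero_lt_one.trans_le (hs hr)),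
          cfc_const_mul (π / 2) Real.sqrt a, smul_smul, div_mul_div_comm, mul_comm 2 π,
          div_self (by positivity), one_smul]
      _ = _ := by
        rw [hcfc]
        congr 1
        exact integral_congr_ae
          (.of_forall fun x => (one_sub_sq_smul_ringInverse_eq_cfc ha hs x).symm)
  case cont =>
    refine ContinuousOn.div (by fun_prop) (by fun_prop) fun p hp => ?_
    have : (1 : ℝ) ≤ p.2 := hs hp.2
    positivity
  case bound =>
    refine .of_forall fun x r hr => ?_
    have : (1 : ℝ) ≤ r := hs hr
    rw [Real.norm_of_nonneg (by positivity)]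
    exact div_sq_add_le_mul_inv_one_add_sq x this (le_norm_of_mem_spectrum hr)

lemma integral_one_sub_sq_smul_ringInverse_sub (ha : IsSelfAdjoint a)
    (hs : spectrum ℝ a ⊆ Ici 1) (hb : IsSelfAdjoint b) (hsb : spectrum ℝ b ⊆ Ici 1) :
    (∫ x in Ioi (0 : ℝ), (1 - x ^ 2 • Ring.inverse (x ^ 2 • (1 : A) + b)))
        - ∫ x in Ioi (0 : ℝ), (1 - x ^ 2 • Ring.inverse (x ^ 2 • (1 : A) + a))
      = ∫ x in Ioi (0 : ℝ),
          x ^ 2 • (Ring.inverse (x ^ 2 • (1 : A) + a) * (b - a) *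
            Ring.inverse (x ^ 2 • (1 : A) + b)) := by
  rw [← integral_sub (integrable_one_sub_sq_smul_ringInverse hb hsb).integrableOn
    (integrable_one_sub_sq_smul_ringInverse ha hs).integrableOn]
  refine integral_congr_ae (.of_forall fun x => ?_)
  have hunits := iff_of_true (isUnit_sq_smul_one_add ha hs x) (isUnit_sq_smul_one_add hb hsb x)
  dsimp only
  rw [sub_sub_sub_cancel_left, ← smul_sub, Ring.inverse_sub_inverse hunits,
    add_sub_add_left_eq_sub]

lemma continuousAt_integral_sq_smul_ringInverse_mul_mul_ringInverse {f : ℝ → A} {t : ℝ}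
    (ha : IsSelfAdjoint a) (hs : spectrum ℝ a ⊆ Ici 1) (hf : ContinuousAt f t)
    (hfa : ∀ s, IsSelfAdjoint (f s)) (hfs : ∀ s, spectrum ℝ (f s) ⊆ Ici 1) (m : A) :
    ContinuousAt (fun s => ∫ x in Ioi (0 : ℝ),
      x ^ 2 • (Ring.inverse (x ^ 2 • (1 : A) + a) * m * Ring.inverse (x ^ 2 • (1 : A) + f s))) t :=
  continuousAt_of_dominated
    (.of_forall fun s =>
      (integrable_sq_smul_ringInverse_mul_mul_ringInverse ha hs (hfa s) (hfs s) m).integrableOn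
        |>.aestronglyMeasurable)
    (.of_forall fun s => ae_of_all _ <|
      norm_sq_smul_ringInverse_mul_mul_ringInverse_le ha hs (hfa s) (hfs s) m)
    (integrable_inv_one_add_sq.const_mul ‖m‖).integrableOn
    (ae_of_all _ fun x => continuousAt_const.smul (continuousAt_const.mul
      ((continuousAt_const.add hf).ringInverse (isUnit_sq_smul_one_add (hfa t) (hfs t) x))))

theorem hasDerivAt_sqrt_add_smul [PartialOrder A] [StarOrderedRing A] {c : ℝ → ℝ} {c' t : ℝ}
    (ha : IsSelfAdjoint a) (hb : IsSelfAdjoint b) (hc : HasDerivAt c c' t)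
    (hs : ∀ s, spectrum ℝ (a + c s • b) ⊆ Ici 1) :
    HasDerivAt (fun s => CFC.sqrt (a + c s • b))
      ((2 / π * c') • ∫ x in Ioi (0 : ℝ), x ^ 2 •
        (Ring.inverse (x ^ 2 • (1 : A) + (a + c t • b)) * b *
          Ring.inverse (x ^ 2 • (1 : A) + (a + c t • b)))) t := by
  have hsa : ∀ s, IsSelfAdjoint (a + c s • b) := fun s =>
    ha.add ((IsSelfAdjoint.all (c s)).smul hb)
  have hdiff : ∀ s,
      (∫ x in Ioi (0 : ℝ), (1 - x ^ 2 • Ring.inverse (x ^ 2 • (1 : A) + (a + c s • b))))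
        - ∫ x in Ioi (0 : ℝ), (1 - x ^ 2 • Ring.inverse (x ^ 2 • (1 : A) + (a + c t • b)))
      = (c s - c t) • ∫ x in Ioi (0 : ℝ), x ^ 2 • (Ring.inverse (x ^ 2 • (1 : A) + (a + c t • b))
          * b * Ring.inverse (x ^ 2 • (1 : A) + (a + c s • b))) := fun s => by
    rw [integral_one_sub_sq_smul_ringInverse_sub (hsa t) (hs t) (hsa s) (hs s),
      ← integral_smul, add_sub_add_left_eq_sub, ← sub_smul]
    simp only [mul_smul_comm, smul_mul_assoc, smul_comm (c s - c t)]
  have hcont := continuousAt_integral_sq_smul_ringInverse_mul_mul_ringInverse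
    (f := fun s => a + c s • b) (hsa t) (hs t)
    (continuousAt_const.add (hc.continuousAt.smul continuousAt_const)) hsa hs b
  have key := (hasDerivAt_of_sub_eq_smul hc hcont hdiff).const_smul (2 / π)
  rw [smul_smul] at key
  exact key.congr_of_eventuallyEq (.of_forall fun s =>
    sqrt_eq_integral_one_sub_sq_smul_ringInverse (hsa s) (hs s))

end CStarAlgebra

variable {𝓗 : Type*} [NormedAddCommGroup 𝓗] [InnerProductSpace ℂ 𝓗] [CompleteSpace 𝓗]

theorem stmt_14_general (H₀ H₁ : 𝓗 →L[ℂ] 𝓗) (hH₀ : IsSelfAdjoint H₀) (hH₁ : IsSelfAdjoint H₁)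
    (ε η : ℝ) (g : ℝ → ℝ) (hg : ContDiff ℝ 1 g)
    (H : ℝ → 𝓗 →L[ℂ] 𝓗) (hH : ∀ t, H t = H₀ + (ε * g (η * t)) • H₁)
    (hspec : ∀ t, spectrum ℝ (H t) ⊆ Set.Ici 1) :
    ∀ t : ℝ,
      IntegrableOn
        (fun x : ℝ => x ^ 2 •
          (Ring.inverse (x ^ 2 • (1 : 𝓗 →L[ℂ] 𝓗) + H t) * H₁ *
            Ring.inverse (x ^ 2 • (1 : 𝓗 →L[ℂ] 𝓗) + H t))) (Set.Ioi 0) ∧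
      HasDerivAt (fun s => CFC.sqrt (H s))
        ((2 * ε * η * deriv g (η * t) / Real.pi) •
          ∫ x in Set.Ioi (0 : ℝ),
            x ^ 2 • (Ring.inverse (x ^ 2 • (1 : 𝓗 →L[ℂ] 𝓗) + H t) * H₁ *
              Ring.inverse (x ^ 2 • (1 : 𝓗 →L[ℂ] 𝓗) + H t))) t := by
  intro t
  obtain rfl : H = fun s => H₀ + (ε * g (η * s)) • H₁ := funext hH
  have hsa : ∀ s, IsSelfAdjoint (H₀ + (ε * g (η * s)) • H₁) := fun s =>
    hH₀.add ((IsSelfAdjoint.all (ε * g (η * s))).smul hH₁)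
  have hc : HasDerivAt (fun s => ε * g (η * s)) (ε * (deriv g (η * t) * η)) t := by
    have hη : HasDerivAt (fun s => η * s) η t := by simpa using (hasDerivAt_id t).const_mul η
    exact ((hg.differentiable one_ne_zero _).hasDerivAt.comp t hη).const_mul ε
  refine ⟨(integrable_sq_smul_ringInverse_mul_mul_ringInverse (hsa t) (hspec t) (hsa t) (hspec t)
    H₁).integrableOn, ?_⟩
  rw [show 2 * ε * η * deriv g (η * t) / π = 2 / π * (ε * (deriv g (η * t) * η)) by ring]
  exact hasDerivAt_sqrt_add_smul hH₀ hH₁ hc hspec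

/-- Let `H(t) := H₀ + ε·g(η·t)·H₁` with `H₀, H₁` self-adjoint, `ε, η > 0`, `g` a
switching function, and spectrum of `H(t)` in `[1,∞)` for every `t`.  Then for every
`t` the map `s ↦ √H(s)` is differentiable at `t` in operator norm, the integrand
`x ↦ x²·(x²·1 + H(t))⁻¹·H₁·(x²·1 + H(t))⁻¹` is Bochner integrable on `(0,∞)`, and the
derivative equals `(2·ε·η·g′(η·t)/π)` times its Bochner integral. -/
theorem stmt_14 (H₀ H₁ : 𝓗 →L[ℂ] 𝓗) (hH₀ : IsSelfAdjoint H₀) (hH₁ : IsSelfAdjoint H₁)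
    (ε η : ℝ) (hε : 0 < ε) (hη : 0 < η)
    (g : ℝ → ℝ) (hg : ContDiff ℝ 1 g) (hg0 : ∀ s ≤ (0 : ℝ), g s = 0)
    (hg' : ∀ s ∉ Set.Ioo (0 : ℝ) 1, deriv g s = 0)
    (H : ℝ → 𝓗 →L[ℂ] 𝓗) (hH : ∀ t, H t = H₀ + (ε * g (η * t)) • H₁)
    (hspec : ∀ t, spectrum ℝ (H t) ⊆ Set.Ici 1) :
    ∀ t : ℝ,
      IntegrableOn
        (fun x : ℝ => x ^ 2 •
          (Ring.inverse (x ^ 2 • (1 : 𝓗 →L[ℂ] 𝓗) + H t) * H₁ *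
            Ring.inverse (x ^ 2 • (1 : 𝓗 →L[ℂ] 𝓗) + H t))) (Set.Ioi 0) ∧
      HasDerivAt (fun s => CFC.sqrt (H s))
        ((2 * ε * η * deriv g (η * t) / Real.pi) •
          ∫ x in Set.Ioi (0 : ℝ),
            x ^ 2 • (Ring.inverse (x ^ 2 • (1 : 𝓗 →L[ℂ] 𝓗) + H t) * H₁ *
              Ring.inverse (x ^ 2 • (1 : 𝓗 →L[ℂ] 𝓗) + H t))) t :=
  stmt_14_general H₀ H₁ hH₀ hH₁ ε η g hg H hH hspec
end
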